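/- arXiv:math/0406434 — 7 statements merged into one kernel-verified Lean document; each statement's English description precedes it below -/
import Mathlib

section
/- Let π ∈ H₍₁,₂,₂₎ be primary with N(π) = p a rational prime. If π − 1 ∈ 2(1+i)·H₍₁,₂,₂₎ then p ≡ 1 (mod 4), and if π − (1 + 2v₃) ∈ 2(1+i)·H₍₁,₂,₂₎ then p ≡ 3 (mod 4). -/
open Quaternion

noncomputable section

/-- `v₁ = 1` -/
def v₁ : ℍ[ℝ] := 1

/-- `v₂ = i` -/
def v₂ : ℍ[ℝ] := ⟨0, 1, 0, 0⟩

/-- `v₃ = (1 + i + √2·j)/2` -/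
def v₃ : ℍ[ℝ] := ⟨1/2, 1/2, Real.sqrt 2 / 2, 0⟩

/-- `v₄ = (1 + i + √2·k)/2` -/
def v₄ : ℍ[ℝ] := ⟨1/2, 1/2, 0, Real.sqrt 2 / 2⟩

/-- The quaternion order `H₍₁,₂,₂₎`: the ℤ-span of `{v₁, v₂, v₃, v₄}`. -/
def H122 : Set ℍ[ℝ] :=
  {q | ∃ a b c d : ℤ, q = a • v₁ + b • v₂ + c • v₃ + d • v₄}

/-!
Left multiplication by `1 + i` preserves `H₍₁,₂,₂₎`, so in the basis `v₁, …, v₄` a primary `π` has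
coordinates `(1 + 2x, 2y, 2z, 2w)`, with `z + w` even if `π ≡ 1` and odd if `π ≡ 1 + 2v₃`.
In these coordinates the norm is the integral form `a² + b² + c² + d² + cd + (a + b)(c + d)`,
which at such a point is `1 + 2(z + w)` modulo `4`.
-/

namespace H122

def ofCoords (a b c d : ℤ) : ℍ[ℝ] := a • v₁ + b • v₂ + c • v₃ + d • v₄

def normForm (a b c d : ℤ) : ℤ := a ^ 2 + b ^ 2 + c ^ 2 + d ^ 2 + c * d + (a + b) * (c + d)

section coords

variable (a b c d : ℤ)

private lemma ofCoords_eq_real_smul :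
    ofCoords a b c d = (a : ℝ) • v₁ + (b : ℝ) • v₂ + (c : ℝ) • v₃ + (d : ℝ) • v₄ := by
  simp only [ofCoords, Int.cast_smul_eq_zsmul]

@[simp] lemma re_ofCoords : (ofCoords a b c d).re = a + c / 2 + d / 2 := by
  simp only [ofCoords_eq_real_smul, re_add, re_smul]
  simp [v₁, v₂, v₃, v₄]; ring

@[simp] lemma imI_ofCoords : (ofCoords a b c d).imI = b + c / 2 + d / 2 := by
  simp only [ofCoords_eq_real_smul, imI_add, imI_smul]
  simp [v₁, v₂, v₃, v₄]; ring

@[simp] lemma imJ_ofCoords : (ofCoords a b c d).imJ = Real.sqrt 2 / 2 * c := by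
  simp only [ofCoords_eq_real_smul, imJ_add, imJ_smul]
  simp [v₁, v₂, v₃, v₄]; ring

@[simp] lemma imK_ofCoords : (ofCoords a b c d).imK = Real.sqrt 2 / 2 * d := by
  simp only [ofCoords_eq_real_smul, imK_add, imK_smul]
  simp [v₁, v₂, v₃, v₄]; ring

lemma normSq_ofCoords : normSq (ofCoords a b c d) = normForm a b c d := by
  have hs : Real.sqrt 2 ^ 2 = 2 := Real.sq_sqrt zero_le_two
  rw [normSq_def', re_ofCoords, imI_ofCoords, imJ_ofCoords, imK_ofCoords, normForm]
  push_cast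
  linear_combination ((c : ℝ) ^ 2 + (d : ℝ) ^ 2) / 4 * hs

lemma one_add_v₂_mul_ofCoords :
    (1 + v₂) * ofCoords a b c d = ofCoords (a - b - c) (a + b + d) (c - d) (c + d) := by
  ext <;> simp [re_mul, imI_mul, imJ_mul, imK_mul] <;> simp [v₂] <;> ring

lemma one_add_two_mul_ofCoords :
    1 + 2 * ofCoords a b c d = ofCoords (1 + 2 * a) (2 * b) (2 * c) (2 * d) := by
  ext <;> simp [two_mul] <;> ring

lemma one_add_two_mul_v₃_add_two_mul_ofCoords :
    1 + 2 * v₃ + 2 * ofCoords a b c d = ofCoords (1 + 2 * a) (2 * b) (2 * (1 + c)) (2 * d) := by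
  ext <;> simp [two_mul] <;> simp [v₃] <;> ring

end coords

lemma mem_iff {q : ℍ[ℝ]} : q ∈ H122 ↔ ∃ a b c d, q = ofCoords a b c d := Iff.rfl

lemma natCast_eq_normForm {π : ℍ[ℝ]} {p : ℕ} (hN : π * star π = p) {a b c d : ℤ}
    (hπ : π = ofCoords a b c d) : (p : ℤ) = normForm a b c d := by
  rw [self_mul_star, ← coe_natCast, coe_inj, hπ, normSq_ofCoords] at hN
  exact_mod_cast hN.symm

lemma normForm_one_add_two_mul_mod_four (x y z w : ℤ) :
    normForm (1 + 2 * x) (2 * y) (2 * z) (2 * w) % 4 = (1 + 2 * (z + w)) % 4 := by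
  have h : normForm (1 + 2 * x) (2 * y) (2 * z) (2 * w) =
      1 + 2 * (z + w) + 4 * (x + x ^ 2 + y ^ 2 + z ^ 2 + w ^ 2 + z * w + (x + y) * (z + w)) := by
    rw [normForm]; ring
  omega

end H122

open H122

theorem primary_prime_mod_four_general (π : ℍ[ℝ]) (p : ℕ)
    (hN : π * star π = (p : ℍ[ℝ])) :
    ((∃ h ∈ H122, π - 1 = 2 * (1 + v₂) * h) → p % 4 = 1) ∧
    ((∃ h ∈ H122, π - (1 + 2 * v₃) = 2 * (1 + v₂) * h) → p % 4 = 3) := by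
  constructor
  · rintro ⟨_, hh, hπ⟩
    obtain ⟨a, b, c, d, rfl⟩ := mem_iff.1 hh
    rw [sub_eq_iff_eq_add', mul_assoc, one_add_v₂_mul_ofCoords, one_add_two_mul_ofCoords] at hπ
    have hmod := normForm_one_add_two_mul_mod_four (a - b - c) (a + b + d) (c - d) (c + d)
    have hp := natCast_eq_normForm hN hπ
    omega
  · rintro ⟨_, hh, hπ⟩
    obtain ⟨a, b, c, d, rfl⟩ := mem_iff.1 hh
    rw [sub_eq_iff_eq_add', mul_assoc, one_add_v₂_mul_ofCoords,
      one_add_two_mul_v₃_add_two_mul_ofCoords] at hπ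
    have hmod := normForm_one_add_two_mul_mod_four (a - b - c) (a + b + d) (1 + (c - d)) (c + d)
    have hp := natCast_eq_normForm hN hπ
    omega

/-- Let `π ∈ H₍₁,₂,₂₎` be primary with norm a rational prime `p`.  If
`π − 1 ∈ 2(1+i)·H₍₁,₂,₂₎` then `p ≡ 1 (mod 4)`, and if
`π − (1 + 2v₃) ∈ 2(1+i)·H₍₁,₂,₂₎` then `p ≡ 3 (mod 4)`. -/
theorem primary_prime_mod_four (π : ℍ[ℝ]) (hπ : π ∈ H122) (p : ℕ) (hp : p.Prime)
    (hN : π * star π = (p : ℍ[ℝ])) :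
    ((∃ h ∈ H122, π - 1 = 2 * (1 + v₂) * h) → p % 4 = 1) ∧
    ((∃ h ∈ H122, π - (1 + 2 * v₃) = 2 * (1 + v₂) * h) → p % 4 = 3) :=
  primary_prime_mod_four_general π p hN
end
end

section
/- For every rational prime p, the element p·1 of H₍₁,₂,₂₎ is not a prime of H₍₁,₂,₂₎; that is, there exist a, b ∈ H₍₁,₂,₂₎, neither of which is a unit of H₍₁,₂,₂₎, with p = a·b. -/
open Quaternion

noncomputable section

/-- A unit of `H₍₁,₂,₂₎`: an element with a two-sided inverse in `H₍₁,₂,₂₎`. -/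
def IsUnitH (u : ℍ[ℝ]) : Prop :=
  u ∈ H122 ∧ ∃ v ∈ H122, u * v = 1 ∧ v * u = 1

/-!
The reduced norm of `H₍₁,₂,₂₎` is the integral form
`a² + b² + (a + b)(c + d) + c² + d² + cd`, and the substitution
`(a, b, c, d) = (x - z, y - z, z + w, z - w)` turns it into `x² + y² + z² + w²`.
By Lagrange's four-square theorem there is therefore some `q ∈ H₍₁,₂,₂₎` of norm `p`, and
`p = q · q̄`. Neither factor is a unit, since a unit has norm `1` by integrality of the norm.
-/

lemma span_v_eq_mk (a b c d : ℤ) :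
    a • v₁ + b • v₂ + c • v₃ + d • v₄ =
      (⟨a + (c + d) / 2, b + (c + d) / 2, c * √2 / 2, d * √2 / 2⟩ : ℍ[ℝ]) := by
  ext <;>
    simp only [re_add, imI_add, imJ_add, imK_add, re_smul, imI_smul, imJ_smul, imK_smul] <;>
    simp [v₁, v₂, v₃, v₄, zsmul_eq_mul] <;> ring

lemma normSq_span_v (a b c d : ℤ) :
    normSq (a • v₁ + b • v₂ + c • v₃ + d • v₄) =
      ((a ^ 2 + b ^ 2 + (a + b) * (c + d) + c ^ 2 + d ^ 2 + c * d : ℤ) : ℝ) := by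
  have h2 : √2 ^ 2 = 2 := Real.sq_sqrt zero_le_two
  rw [normSq_def', span_v_eq_mk]
  push_cast
  linear_combination ((c : ℝ) ^ 2 + (d : ℝ) ^ 2) / 4 * h2

lemma exists_int_normSq_eq_of_mem_H122 {q : ℍ[ℝ]} (hq : q ∈ H122) :
    ∃ n : ℤ, normSq q = n := by
  obtain ⟨a, b, c, d, rfl⟩ := hq
  exact ⟨_, normSq_span_v a b c d⟩

lemma not_isUnitH_of_normSq_eq {u : ℍ[ℝ]} {n : ℕ} (hu : normSq u = n) (hn : n ≠ 1) :
    ¬ IsUnitH u := by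
  rintro ⟨-, v, hv, huv, -⟩
  obtain ⟨m, hm⟩ := exists_int_normSq_eq_of_mem_H122 hv
  have hnm : (n : ℤ) * m = 1 := by
    have h : normSq u * normSq v = 1 := by rw [← map_mul, huv, map_one]
    rw [hu, hm] at h
    exact_mod_cast h
  exact hn (by exact_mod_cast Int.eq_one_of_mul_eq_one_right (Int.natCast_nonneg n) hnm)

def quatOfFourSquares (x y z w : ℤ) : ℍ[ℝ] :=
  ⟨x, y, (z + w) * √2 / 2, (z - w) * √2 / 2⟩

lemma quatOfFourSquares_mem_H122 (x y z w : ℤ) : quatOfFourSquares x y z w ∈ H122 :=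
  ⟨x - z, y - z, z + w, z - w, by
    rw [span_v_eq_mk, quatOfFourSquares]
    push_cast
    ext <;> simp⟩

lemma normSq_quatOfFourSquares (x y z w : ℤ) :
    normSq (quatOfFourSquares x y z w) = ((x ^ 2 + y ^ 2 + z ^ 2 + w ^ 2 : ℤ) : ℝ) := by
  have h2 : √2 ^ 2 = 2 := Real.sq_sqrt zero_le_two
  rw [normSq_def', quatOfFourSquares]
  push_cast
  linear_combination (((z : ℝ) + w) ^ 2 + ((z : ℝ) - w) ^ 2) / 4 * h2

lemma star_quatOfFourSquares (x y z w : ℤ) :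
    star (quatOfFourSquares x y z w) = quatOfFourSquares x (-y) (-z) (-w) := by
  ext <;> simp only [re_star, imI_star, imJ_star, imK_star] <;> simp [quatOfFourSquares] <;> ring

/-- No rational prime `p` is a prime of `H₍₁,₂,₂₎`: there exist non-units
`a, b ∈ H₍₁,₂,₂₎` with `p = a·b`. -/
theorem rat_prime_not_primeH (p : ℕ) (hp : p.Prime) :
    ∃ a ∈ H122, ∃ b ∈ H122, ¬ IsUnitH a ∧ ¬ IsUnitH b ∧ (p : ℍ[ℝ]) = a * b := by
  obtain ⟨x, y, z, w, hsum⟩ := Nat.sum_four_squares p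
  set q := quatOfFourSquares x y z w
  have hq : normSq q = p := by
    rw [normSq_quatOfFourSquares, ← hsum]
    norm_cast
  refine ⟨q, quatOfFourSquares_mem_H122 _ _ _ _, star q, ?_, not_isUnitH_of_normSq_eq hq hp.ne_one,
    not_isUnitH_of_normSq_eq (by rwa [normSq_star]) hp.ne_one, ?_⟩
  · rw [star_quatOfFourSquares]
    exact quatOfFourSquares_mem_H122 _ _ _ _
  · rw [self_mul_star, hq, coe_natCast]
end
end

section
/- Let m be an odd positive integer. The number of quadruples (q₁, q₂, q₃, q₄) ∈ (ℤ/mℤ)⁴ such that q₁² + q₂² + 2q₃² + 2q₄² = 0 in ℤ/mℤ and gcd(q₁, q₂, q₃, q₄, m) = 1 (for integer lifts of the qᵢ) equals ψ(m) = m³ · ∏_{p ∣ m} (1 − 1/p²)(1 + 1/p), where the product runs over the distinct primes p dividing m. -/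
/-!
The count is multiplicative in `m` by the Chinese remainder theorem, so it suffices to treat
`m = p ^ k` with `p` an odd prime. Over `𝔽_p`, writing `χ` for the quadratic character, Jacobi sums
give `p + (p - 1) χ(-1)` solutions of `x² + y² = 0` and `p - χ(-1)` of `x² + y² = c ≠ 0`; convolving
two such counts shows that `x² + y² + 2z² + 2w²` has `p³ + p² - p` zeros, all of them primitive
except `0`. For `k ≥ 1` every primitive zero modulo `p ^ k` has exactly `p³` lifts to a zero modulo
`p ^ (k + 1)`: the lifts of `u` are `u + δ` with `δ ∈ (p ^ k ℤ / p ^ (k + 1) ℤ)⁴`, a square-zero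
ideal, on which the form is affine in `δ` with linear part `δ ↦ ∑ 2 aᵢ uᵢ δᵢ` (weights
`a = (1, 1, 2, 2)`), surjective because `u` is primitive and every `2 aᵢ` is a unit.
-/

open Finset Function
open QuadraticMap (weightedSumSquares weightedSumSquares_apply)

section PrimitiveVector

variable {ι R S : Type*} [CommRing R] [CommRing S]

def IsPrimitiveVector (v : ι → R) : Prop := Ideal.span (Set.range v) = ⊤

theorem IsPrimitiveVector.map {v : ι → R} (hv : IsPrimitiveVector v) (f : R →+* S) :
    IsPrimitiveVector (f ∘ v) := by
  rw [IsPrimitiveVector, Set.range_comp, ← Ideal.map_span, hv, Ideal.map_top]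

theorem isPrimitiveVector_iff_ne_zero {K : Type*} [Field K] {v : ι → K} :
    IsPrimitiveVector v ↔ v ≠ 0 := by
  refine ⟨?_, fun hv => ?_⟩
  · rintro hv rfl
    have hle : Ideal.span (Set.range (0 : ι → K)) ≤ ⊥ :=
      Ideal.span_le.mpr (by rintro _ ⟨i, rfl⟩; simp)
    exact top_ne_bot (le_bot_iff.mp (hv ▸ hle))
  · obtain ⟨i, hi⟩ := Function.ne_iff.mp hv
    exact Ideal.eq_top_of_isUnit_mem _ (Ideal.subset_span ⟨i, rfl⟩) (Ne.isUnit hi)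

variable [Fintype ι]

theorem isPrimitiveVector_iff {v : ι → R} :
    IsPrimitiveVector v ↔ ∃ c : ι → R, ∑ i, c i * v i = 1 := by
  rw [IsPrimitiveVector, Ideal.eq_top_iff_one, Ideal.mem_span_range_iff_exists_fun]

theorem isPrimitiveVector_prod_iff {A B : Type*} [CommRing A] [CommRing B] {v : ι → A × B} :
    IsPrimitiveVector v ↔
      IsPrimitiveVector (Prod.fst ∘ v) ∧ IsPrimitiveVector (Prod.snd ∘ v) := by
  refine ⟨fun hv => ⟨hv.map (RingHom.fst A B), hv.map (RingHom.snd A B)⟩, ?_⟩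
  simp only [isPrimitiveVector_iff]
  rintro ⟨⟨c, hc⟩, ⟨d, hd⟩⟩
  exact ⟨fun i => (c i, d i), Prod.ext (by simpa [Prod.fst_sum] using hc)
    (by simpa [Prod.snd_sum] using hd)⟩

theorem IsPrimitiveVector.unit_mul {v w : ι → R} (hv : IsPrimitiveVector v)
    (hw : ∀ i, IsUnit (w i)) : IsPrimitiveVector fun i => w i * v i := by
  obtain ⟨c, hc⟩ := isPrimitiveVector_iff.mp hv
  refine isPrimitiveVector_iff.mpr ⟨fun i => c i * (hw i).unit⁻¹, ?_⟩
  simpa [mul_assoc, ← mul_assoc _ (w _)] using hc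

theorem IsPrimitiveVector.surjective_sum_smul {M : Type*} [AddCommGroup M] [Module R M]
    {c : ι → R} (hc : IsPrimitiveVector c) : Surjective fun δ : ι → M => ∑ i, c i • δ i := by
  obtain ⟨b, hb⟩ := isPrimitiveVector_iff.mp hc
  refine fun y => ⟨fun i => b i • y, ?_⟩
  simp only [smul_smul, ← sum_smul, mul_comm (c _), hb, one_smul]

/-- A lift of a Bézout relation for `π ∘ v` has value `1 + n` with `n ^ 2 = 0`, a unit. -/
theorem IsPrimitiveVector.of_comp {π : R →+* S} (hπ : Surjective π)
    (hsq : ∀ x ∈ RingHom.ker π, x ^ 2 = 0) {v : ι → R} (hv : IsPrimitiveVector (π ∘ v)) :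
    IsPrimitiveVector v := by
  obtain ⟨c, hc⟩ := isPrimitiveVector_iff.mp hv
  set s := ∑ i, surjInv hπ (c i) * v i
  have hs : s - 1 ∈ RingHom.ker π := by
    simp [s, RingHom.mem_ker, map_sum, surjInv_eq hπ, ← hc]
  have hunit : IsUnit s := by
    simpa using (IsNilpotent.isUnit_one_add ⟨2, hsq _ hs⟩ : IsUnit (1 + (s - 1)))
  exact Ideal.eq_top_of_isUnit_mem _ (Ideal.mem_span_range_iff_exists_fun.mpr ⟨_, rfl⟩) hunit

end PrimitiveVector

section PrimitiveZeros

variable {ι R S : Type*} [Fintype ι] [CommRing R] [CommRing S] (a : ι → ℤ)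

theorem map_weightedSumSquares (f : R →+* S) (v : ι → R) :
    f (weightedSumSquares R a v) = weightedSumSquares S a (f ∘ v) := by
  simp [map_sum]

def primitiveZeros (R : Type*) [CommRing R] : Set (ι → R) :=
  {v | weightedSumSquares R a v = 0 ∧ IsPrimitiveVector v}

def primitiveZerosCongr (e : R ≃+* S) : primitiveZeros a R ≃ primitiveZeros a S :=
  Equiv.subtypeEquiv (Equiv.piCongrRight fun _ => e.toEquiv) fun v => by
    have hQ := map_weightedSumSquares a (e : R →+* S) v
    refine and_congr ?_ ⟨fun hv => hv.map (e : R →+* S), fun hv => ?_⟩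
    · exact (map_eq_zero_iff _ e.injective).symm.trans (hQ ▸ Iff.rfl)
    · simpa [comp_def] using hv.map (e.symm : S →+* R)

theorem primitiveZeros_prod_iff {A B : Type*} [CommRing A] [CommRing B] (v : ι → A × B) :
    v ∈ primitiveZeros a (A × B) ↔
      Prod.fst ∘ v ∈ primitiveZeros a A ∧ Prod.snd ∘ v ∈ primitiveZeros a B := by
  have hQ : weightedSumSquares (A × B) a v =
      (weightedSumSquares A a (Prod.fst ∘ v), weightedSumSquares B a (Prod.snd ∘ v)) :=
    Prod.ext (map_weightedSumSquares a (RingHom.fst A B) v)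
      (map_weightedSumSquares a (RingHom.snd A B) v)
  simp only [primitiveZeros, Set.mem_ofPred_eq, hQ, Prod.mk_eq_zero, isPrimitiveVector_prod_iff]
  tauto

def primitiveZerosProdEquiv (A B : Type*) [CommRing A] [CommRing B] :
    primitiveZeros a (A × B) ≃ primitiveZeros a A × primitiveZeros a B :=
  (Equiv.subtypeEquiv (Equiv.arrowProdEquivProdArrow _ _ _) (primitiveZeros_prod_iff a)).trans
    Equiv.subtypeProdEquivProd

theorem card_primitiveZeros_zmod_mul {m n : ℕ} (hmn : m.Coprime n) :
    Nat.card (primitiveZeros a (ZMod (m * n))) =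
      Nat.card (primitiveZeros a (ZMod m)) * Nat.card (primitiveZeros a (ZMod n)) := by
  rw [← Nat.card_prod, Nat.card_congr ((primitiveZerosCongr a (ZMod.chineseRemainder hmn)).trans
    (primitiveZerosProdEquiv a _ _))]

end PrimitiveZeros

theorem AddMonoidHom.card_fiber_mul_card {G H : Type*} [AddGroup G] [AddGroup H] (f : G →+ H)
    (hf : Surjective f) (y : H) : Nat.card {g // f g = y} * Nat.card H = Nat.card G := by
  obtain ⟨g₀, rfl⟩ := hf y
  have e : {g // f g = f g₀} ≃ f.ker :=
    Equiv.subtypeEquiv (Equiv.addRight (-g₀)) fun g => by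
      simp [AddMonoidHom.mem_ker, add_neg_eq_zero]
  rw [Nat.card_congr e, ← AddSubgroup.card_mul_index f.ker, AddSubgroup.index_ker,
    AddMonoidHom.range_eq_top.mpr hf, AddSubgroup.card_top]

section Lifting

variable {ι R S : Type*} [Fintype ι] [CommRing R] [CommRing S] (a : ι → ℤ) {π : R →+* S}

theorem weightedSumSquares_add_of_sq_eq_zero (u δ : ι → R) (hδ : ∀ i, δ i ^ 2 = 0) :
    weightedSumSquares R a (u + δ) = weightedSumSquares R a u + ∑ i, 2 * a i * u i * δ i := by
  simp only [weightedSumSquares_apply, Pi.add_apply, zsmul_eq_mul, ← sum_add_distrib]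
  refine sum_congr rfl fun i _ => ?_
  linear_combination (a i : R) * hδ i

theorem card_lifts_mul_card_ker (hπ : Surjective π) (hsq : ∀ x ∈ RingHom.ker π, x ^ 2 = 0)
    (h2 : IsUnit (2 : R)) (ha : ∀ i, IsUnit (a i : R)) {v : ι → S}
    (hv : v ∈ primitiveZeros a S) :
    Nat.card {u : ι → R // π ∘ u = v ∧ weightedSumSquares R a u = 0} *
        Nat.card (RingHom.ker π) = Nat.card (RingHom.ker π) ^ Fintype.card ι := by
  obtain ⟨u₀, rfl⟩ : ∃ u₀, π ∘ u₀ = v := hπ.comp_left v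
  set I := RingHom.ker π
  set c : ι → R := fun i => 2 * a i * u₀ i
  have hc : IsPrimitiveVector c := (hv.2.of_comp hπ hsq).unit_mul fun i => h2.mul (ha i)
  have hQ₀ : -weightedSumSquares R a u₀ ∈ I := by
    simpa [I, RingHom.mem_ker, map_weightedSumSquares] using hv.1
  let L : (ι → I) →+ I :=
    { toFun := fun δ => ∑ i, c i • δ i
      map_zero' := by simp
      map_add' := fun δ δ' => by simp [smul_add, sum_add_distrib] }
  have hL : ∀ δ, (L δ : R) = ∑ i, c i * δ i := fun δ => by simp [L]
  have hexp : ∀ δ : ι → I, weightedSumSquares R a (u₀ + fun i => (δ i : R)) =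
      weightedSumSquares R a u₀ + L δ := fun δ => by
    rw [hL, weightedSumSquares_add_of_sq_eq_zero a _ _ fun i => hsq _ (δ i).2]
  have hmem : ∀ u : ι → R, π ∘ u = π ∘ u₀ → ∀ i, u i - u₀ i ∈ I := fun u hu i => by
    rw [RingHom.mem_ker, map_sub, sub_eq_zero]
    exact congrFun hu i
  have e : {u : ι → R // π ∘ u = π ∘ u₀ ∧ weightedSumSquares R a u = 0} ≃
      {δ // L δ = ⟨_, hQ₀⟩} :=
    { toFun := fun u => ⟨fun i => ⟨u.1 i - u₀ i, hmem u.1 u.2.1 i⟩, Subtype.ext <| by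
        have := hexp fun i => ⟨u.1 i - u₀ i, hmem u.1 u.2.1 i⟩
        rw [show (u₀ + fun i => u.1 i - u₀ i) = u.1 by ext; simp] at this
        show (L _ : R) = -weightedSumSquares R a u₀
        linear_combination u.2.2 - this⟩
      invFun := fun δ => ⟨u₀ + fun i => (δ.1 i : R),
        by ext i; simp [RingHom.mem_ker.mp (δ.1 i).2], by rw [hexp, δ.2, add_neg_cancel]⟩
      left_inv := fun u => by ext; simp
      right_inv := fun δ => by ext; simp }
  rw [Nat.card_congr e, L.card_fiber_mul_card hc.surjective_sum_smul, Nat.card_pi, prod_const,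
    card_univ]

theorem card_primitiveZeros_mul_card_ker [Finite R] (hπ : Surjective π)
    (hsq : ∀ x ∈ RingHom.ker π, x ^ 2 = 0) (h2 : IsUnit (2 : R)) (ha : ∀ i, IsUnit (a i : R)) :
    Nat.card (primitiveZeros a R) * Nat.card (RingHom.ker π) =
      Nat.card (RingHom.ker π) ^ Fintype.card ι * Nat.card (primitiveZeros a S) := by
  have : Finite S := Finite.of_surjective π hπ
  have := Fintype.ofFinite (primitiveZeros a S)
  let proj : primitiveZeros a R → primitiveZeros a S := fun u =>
    ⟨π ∘ u, by rw [← map_weightedSumSquares, u.2.1, map_zero], u.2.2.map π⟩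
  have fiber (v : primitiveZeros a S) :
      {u // proj u = v} ≃ {u : ι → R // π ∘ u = v ∧ weightedSumSquares R a u = 0} :=
    { toFun := fun u => ⟨u.1, congrArg Subtype.val u.2, u.1.2.1⟩
      invFun := fun u => ⟨⟨u.1, u.2.2, .of_comp hπ hsq (by rw [u.2.1]; exact v.2.2)⟩,
        Subtype.ext u.2.1⟩ }
  rw [← Nat.card_congr (Equiv.sigmaFiberEquiv proj), Nat.card_sigma, sum_mul]
  simp_rw [Nat.card_congr (fiber _), card_lifts_mul_card_ker a hπ hsq h2 ha (Subtype.prop _)]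
  rw [sum_const, card_univ, smul_eq_mul, mul_comm,
    Fintype.card_eq_nat_card (α := primitiveZeros a S)]

end Lifting

theorem ZMod.sq_eq_zero_of_mem_ker_castHom {n d : ℕ} (hdn : d ∣ n) (hnd : n ∣ d ^ 2) {x : ZMod n}
    (hx : x ∈ RingHom.ker (ZMod.castHom hdn (ZMod d))) : x ^ 2 = 0 := by
  obtain ⟨k, rfl⟩ := ZMod.intCast_surjective x
  rw [RingHom.mem_ker, map_intCast, ZMod.intCast_zmod_eq_zero_iff_dvd] at hx
  rw [← Int.cast_pow, ZMod.intCast_zmod_eq_zero_iff_dvd]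
  exact (Int.natCast_dvd_natCast.mpr hnd).trans (by push_cast; exact pow_dvd_pow_of_dvd hx 2)

theorem ZMod.card_ker_castHom_mul {n d : ℕ} (hdn : d ∣ n) :
    Nat.card (RingHom.ker (ZMod.castHom hdn (ZMod d))) * d = n := by
  simpa [Nat.card_zmod] using (ZMod.castHom hdn (ZMod d)).toAddMonoidHom.card_fiber_mul_card
    (ZMod.castHom_surjective hdn) 0

theorem card_primitiveZeros_zmod_pow_succ_mul {ι : Type*} [Fintype ι] (a : ι → ℤ) {p k : ℕ}
    (hp : p ≠ 0) (hk : k ≠ 0) (h2 : IsUnit (2 : ZMod (p ^ (k + 1))))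
    (ha : ∀ i, IsUnit (a i : ZMod (p ^ (k + 1)))) :
    Nat.card (primitiveZeros a (ZMod (p ^ (k + 1)))) * p =
      p ^ Fintype.card ι * Nat.card (primitiveZeros a (ZMod (p ^ k))) := by
  have hdn : p ^ k ∣ p ^ (k + 1) := pow_dvd_pow p k.le_succ
  have hker : Nat.card (RingHom.ker (ZMod.castHom hdn (ZMod (p ^ k)))) = p := by
    refine Nat.eq_of_mul_eq_mul_right (pow_pos (Nat.pos_of_ne_zero hp) k) ?_
    rw [ZMod.card_ker_castHom_mul, pow_succ']
  have hsq : ∀ x ∈ RingHom.ker (ZMod.castHom hdn (ZMod (p ^ k))), x ^ 2 = 0 := fun _ =>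
    ZMod.sq_eq_zero_of_mem_ker_castHom hdn (by rw [← pow_mul]; exact pow_dvd_pow p (by omega))
  have : NeZero (p ^ (k + 1)) := ⟨pow_ne_zero _ hp⟩
  simpa only [hker] using card_primitiveZeros_mul_card_ker a (ZMod.castHom_surjective hdn) hsq h2 ha

theorem card_filter_add_eq {α β M : Type*} [Fintype α] [Fintype β] [AddCommGroup M] [Fintype M]
    [DecidableEq M] (f : α → M) (g : β → M) (c : M) :
    #{x : α × β | f x.1 + g x.2 = c} = ∑ b, #{x | f x = b} * #{y | g y = c - b} := by
  rw [card_eq_sum_card_fiberwise (f := fun x => f x.1) (t := univ) fun _ _ => mem_univ _]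
  refine sum_congr rfl fun b _ => ?_
  rw [← card_product, ← filter_product, filter_filter, univ_product_univ]
  congr 1
  ext x
  simp only [mem_filter, mem_univ, true_and]
  constructor
  · rintro ⟨h, rfl⟩
    exact ⟨rfl, eq_sub_of_add_eq' h⟩
  · rintro ⟨rfl, h⟩
    exact ⟨by rw [h, add_sub_cancel], rfl⟩

section FiniteField

variable {F : Type*} [Field F] [Fintype F] [DecidableEq F]

local notation "χ" => quadraticChar F
local notation "q" => (Fintype.card F : ℤ)

theorem sum_quadraticChar_mul_quadraticChar_sub (hF : ringChar F ≠ 2) (c : F) :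
    ∑ b, χ b * χ (c - b) = if c = 0 then (q - 1) * χ (-1) else -χ (-1) := by
  split_ifs with hc
  · have hneg (b : F) : χ b * χ (c - b) = χ (-1) * (1 : MulChar F ℤ) b := by
      rw [hc, zero_sub, neg_eq_neg_one_mul, map_mul, mul_left_comm, ← MulChar.mul_apply,
        ← sq, (quadraticChar_isQuadratic F).sq_eq_one]
    rw [sum_congr rfl fun b _ => hneg b, ← mul_sum, MulChar.sum_one_eq_card_units,
      Fintype.card_units, Nat.cast_pred Fintype.card_pos]
    ring
  · have hscale (t : F) : χ (c * t) * χ (c - c * t) = χ t * χ (1 - t) := by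
      rw [← mul_one_sub, map_mul, map_mul, mul_mul_mul_comm, ← sq, quadraticChar_sq_one hc,
        one_mul]
    rw [← (mulLeft_bijective₀ c hc).sum_comp]
    simp only [hscale]
    rw [← jacobiSum, ← jacobiSum_nontrivial_inv (quadraticChar_ne_one hF),
      (quadraticChar_isQuadratic F).inv]

theorem card_sq_add_sq_eq (hF : ringChar F ≠ 2) (c : F) :
    (#{x : F × F | x.1 ^ 2 + x.2 ^ 2 = c} : ℤ) =
      if c = 0 then q + (q - 1) * χ (-1) else q - χ (-1) := by
  have hsqrt (b : F) : (#{x : F | x ^ 2 = b} : ℤ) = χ b + 1 := by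
    rw [← quadraticChar_card_sqrts hF, Set.toFinset_ofPred]
  have hshift : ∑ b, χ (c - b) = 0 := by
    rw [← quadraticChar_sum_zero hF, ← (Equiv.subLeft c).sum_comp]
    simp
  rw [card_filter_add_eq (· ^ 2) (· ^ 2) c]
  push_cast
  simp only [hsqrt, add_mul, mul_add, mul_one, one_mul, sum_add_distrib, hshift,
    quadraticChar_sum_zero hF, sum_const, card_univ, nsmul_eq_mul,
    sum_quadraticChar_mul_quadraticChar_sub hF]
  split_ifs <;> ring

theorem card_sq_add_sq_add_mul_sq_add_sq_eq_zero (hF : ringChar F ≠ 2) {b : F} (hb : b ≠ 0) :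
    (#{x : (F × F) × (F × F) | x.1.1 ^ 2 + x.1.2 ^ 2 + b * (x.2.1 ^ 2 + x.2.2 ^ 2) = 0} : ℤ) =
      q ^ 3 + q ^ 2 - q := by
  have hscale (t : F) : #{y : F × F | b * (y.1 ^ 2 + y.2 ^ 2) = 0 - t} =
      #{y : F × F | y.1 ^ 2 + y.2 ^ 2 = -t / b} := by
    congr 1
    ext y
    simp [eq_div_iff hb, mul_comm b]
  have hzero (t : F) : -t / b = 0 ↔ t = 0 := by simp [hb]
  rw [card_filter_add_eq (fun y : F × F => y.1 ^ 2 + y.2 ^ 2)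
    (fun y : F × F => b * (y.1 ^ 2 + y.2 ^ 2)) 0]
  push_cast
  simp only [hscale, card_sq_add_sq_eq hF, hzero]
  rw [Fintype.sum_eq_add_sum_compl 0, sum_congr rfl fun t ht => by
    rw [if_neg (mem_compl.mp ht ∘ mem_singleton.mpr)], sum_const, card_compl, card_singleton]
  have hε := quadraticChar_sq_one (F := F) (neg_ne_zero.mpr one_ne_zero)
  rw [if_pos rfl, nsmul_eq_mul, Nat.cast_pred Fintype.card_pos]
  linear_combination (q ^ 2 - q) * hε

end FiniteField

theorem Ideal.span_natCast_gcd {R : Type*} [CommRing R] (a b : ℕ) :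
    Ideal.span {((a.gcd b : ℕ) : R)} = Ideal.span {(a : R), (b : R)} := by
  refine le_antisymm ((Ideal.span_singleton_le_iff_mem _).mpr ?_) (Ideal.span_le.mpr ?_)
  · exact Ideal.mem_span_pair.mpr ⟨a.gcdA b, a.gcdB b, by
      simpa [mul_comm] using (congrArg (Int.cast : ℤ → R) (Nat.gcd_eq_gcd_ab a b)).symm⟩
  · rintro _ (rfl | rfl) <;> refine Ideal.mem_span_singleton.mpr (Nat.cast_dvd_cast ?_)
    exacts [a.gcd_dvd_left b, a.gcd_dvd_right b]

section Quaternion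

def quaternionNormWeights : Fin 4 → ℤ := ![1, 1, 2, 2]

@[simps]
def finFourEquiv (R : Type*) : (Fin 4 → R) ≃ R × R × R × R where
  toFun v := (v 0, v 1, v 2, v 3)
  invFun x := ![x.1, x.2.1, x.2.2.1, x.2.2.2]
  left_inv v := by ext i; fin_cases i <;> rfl
  right_inv x := rfl

variable {R : Type*} [CommRing R]

theorem weightedSumSquares_quaternionNormWeights (v : Fin 4 → R) :
    weightedSumSquares R quaternionNormWeights v =
      v 0 ^ 2 + v 1 ^ 2 + 2 * v 2 ^ 2 + 2 * v 3 ^ 2 := by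
  simp [quaternionNormWeights, Fin.sum_univ_four, sq]

theorem isUnit_quaternionNormWeights (h2 : IsUnit (2 : R)) (i : Fin 4) :
    IsUnit (quaternionNormWeights i : R) := by
  fin_cases i <;> simp [quaternionNormWeights, h2]

theorem isPrimitiveVector_vecCons_iff_gcd_eq_one {n : ℕ} [NeZero n]
    (x : ZMod n × ZMod n × ZMod n × ZMod n) :
    IsPrimitiveVector ![x.1, x.2.1, x.2.2.1, x.2.2.2] ↔
      Nat.gcd (Nat.gcd (Nat.gcd (Nat.gcd x.1.val x.2.1.val) x.2.2.1.val) x.2.2.2.val) n = 1 := by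
  set g := Nat.gcd (Nat.gcd (Nat.gcd (Nat.gcd x.1.val x.2.1.val) x.2.2.1.val) x.2.2.2.val) n
  have hspan : Ideal.span {(g : ZMod n)} =
      Ideal.span (Set.range ![x.1, x.2.1, x.2.2.1, x.2.2.2]) := by
    simp [g, Ideal.span_natCast_gcd, Ideal.span_insert, Matrix.range_cons]
    ac_rfl
  rw [IsPrimitiveVector, ← hspan, Ideal.span_singleton_eq_top, ZMod.isUnit_iff_coprime]
  exact ⟨fun h => h.eq_one_of_dvd (Nat.gcd_dvd_right _ _), fun h => h ▸ Nat.coprime_one_left n⟩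

theorem card_primitiveZeros_quaternionNormWeights_field {F : Type*} [Field F] [Fintype F]
    [DecidableEq F] (hF : ringChar F ≠ 2) :
    (Nat.card (primitiveZeros quaternionNormWeights F) : ℤ) =
      Fintype.card F ^ 3 + Fintype.card F ^ 2 - Fintype.card F - 1 := by
  have hzeros : Nat.card (primitiveZeros quaternionNormWeights F) =
      #(({v | weightedSumSquares F quaternionNormWeights v = 0} : Finset _).erase 0) := by
    rw [← Nat.card_eq_finsetCard]
    exact Nat.card_congr (Equiv.subtypeEquivRight fun v => by
      simp [primitiveZeros, isPrimitiveVector_iff_ne_zero, and_comm])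
  have hcard : #{v | weightedSumSquares F quaternionNormWeights v = 0} =
      #{x : (F × F) × (F × F) | x.1.1 ^ 2 + x.1.2 ^ 2 + 2 * (x.2.1 ^ 2 + x.2.2 ^ 2) = 0} := by
    refine card_equiv ((finFourEquiv F).trans (Equiv.prodAssoc F F (F × F)).symm) fun v => ?_
    simp only [mem_filter, mem_univ, true_and, Equiv.trans_apply, finFourEquiv_apply,
      Equiv.prodAssoc_symm_apply]
    rw [weightedSumSquares_quaternionNormWeights]
    ring_nf
  rw [hzeros, card_erase_of_mem (by simp), Nat.cast_pred (card_pos.mpr ⟨0, by simp⟩), hcard,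
    card_sq_add_sq_add_mul_sq_add_sq_eq_zero hF (Ring.two_ne_zero hF)]

theorem card_primitiveZeros_quaternionNormWeights_zmod_prime_pow {p : ℕ} (hp : p.Prime)
    (hp2 : p ≠ 2) {k : ℕ} (hk : 1 ≤ k) :
    (Nat.card (primitiveZeros quaternionNormWeights (ZMod (p ^ k))) : ℚ) =
      (p ^ k : ℚ) ^ 3 * ((1 - 1 / (p : ℚ) ^ 2) * (1 + 1 / (p : ℚ))) := by
  have : Fact p.Prime := ⟨hp⟩
  have hp0 : (p : ℚ) ≠ 0 := Nat.cast_ne_zero.mpr hp.ne_zero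
  induction k, hk using Nat.le_induction with
  | base =>
    have hcard := card_primitiveZeros_quaternionNormWeights_field (F := ZMod p)
      (by rwa [ZMod.ringChar_zmod_n])
    rw [ZMod.card] at hcard
    have hq : (Nat.card (primitiveZeros quaternionNormWeights (ZMod p)) : ℚ) =
        p ^ 3 + p ^ 2 - p - 1 := by
      exact_mod_cast hcard
    rw [pow_one, hq]
    field_simp
    ring
  | succ k hk ih =>
    have h2 : IsUnit (2 : ZMod (p ^ (k + 1))) := by
      simpa using (ZMod.isUnit_iff_coprime 2 _).mpr
        (Nat.coprime_two_left.mpr ((hp.odd_of_ne_two hp2).pow))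
    have hstep := card_primitiveZeros_zmod_pow_succ_mul quaternionNormWeights hp.ne_zero
      (by omega) h2 (isUnit_quaternionNormWeights h2)
    have hq : (Nat.card (primitiveZeros quaternionNormWeights (ZMod (p ^ (k + 1)))) : ℚ) * p =
        p ^ 4 * Nat.card (primitiveZeros quaternionNormWeights (ZMod (p ^ k))) := by
      exact_mod_cast hstep
    rw [ih] at hq
    apply mul_right_cancel₀ hp0
    rw [hq]
    ring

theorem card_primitiveZeros_quaternionNormWeights_zmod {m : ℕ} (hm : Odd m) :
    (Nat.card (primitiveZeros quaternionNormWeights (ZMod m)) : ℚ) =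
      m ^ 3 * ∏ p ∈ m.primeFactors, (1 - 1 / (p : ℚ) ^ 2) * (1 + 1 / (p : ℚ)) := by
  induction m using Nat.recOnPosPrimePosCoprime with
  | prime_pow p k hp hk =>
    rw [Nat.primeFactors_prime_pow hk.ne' hp, prod_singleton, Nat.cast_pow,
      card_primitiveZeros_quaternionNormWeights_zmod_prime_pow hp
        (hm.ne_two_of_dvd_nat (dvd_pow_self p hk.ne')) hk]
  | zero => exact absurd hm (by decide)
  | one =>
    have : Unique (primitiveZeros quaternionNormWeights (ZMod 1)) :=
      ⟨⟨⟨0, Subsingleton.elim _ _, Subsingleton.elim _ _⟩⟩, fun _ => Subsingleton.elim _ _⟩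
    simp
  | coprime a b _ _ hab iha ihb =>
    obtain ⟨ha, hb⟩ := Nat.odd_mul.mp hm
    rw [card_primitiveZeros_zmod_mul _ hab, Nat.cast_mul, iha ha, ihb hb,
      Nat.Coprime.primeFactors_mul hab, prod_union hab.disjoint_primeFactors]
    push_cast
    ring

end Quaternion

theorem count_primitive_null_vectors_general (m : ℕ) (hm : Odd m) :
    (Nat.card {q : ZMod m × ZMod m × ZMod m × ZMod m //
        q.1 ^ 2 + q.2.1 ^ 2 + 2 * q.2.2.1 ^ 2 + 2 * q.2.2.2 ^ 2 = 0 ∧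
        Nat.gcd (Nat.gcd (Nat.gcd (Nat.gcd q.1.val q.2.1.val) q.2.2.1.val) q.2.2.2.val) m
          = 1} : ℚ) =
      m ^ 3 * ∏ p ∈ m.primeFactors, (1 - 1 / (p : ℚ) ^ 2) * (1 + 1 / (p : ℚ)) := by
  have : NeZero m := ⟨hm.pos.ne'⟩
  rw [← card_primitiveZeros_quaternionNormWeights_zmod hm]
  congr 1
  refine Nat.card_congr (Equiv.subtypeEquiv (finFourEquiv _).symm fun q => and_congr ?_
    (isPrimitiveVector_vecCons_iff_gcd_eq_one q).symm)
  rw [weightedSumSquares_quaternionNormWeights]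
  rfl

/-- For `m` odd and positive, the number of quadruples `(q₁, q₂, q₃, q₄) ∈ (ℤ/mℤ)⁴` with
`q₁² + q₂² + 2q₃² + 2q₄² = 0` in `ℤ/mℤ` that are primitive to `m`
(i.e. `gcd(q₁, q₂, q₃, q₄, m) = 1` for lifts) equals
`ψ(m) = m³·∏_{p ∣ m}(1 − 1/p²)(1 + 1/p)`. -/
theorem count_primitive_null_vectors (m : ℕ) (hm : Odd m) (hpos : 0 < m) :
    (Nat.card {q : ZMod m × ZMod m × ZMod m × ZMod m //
        q.1 ^ 2 + q.2.1 ^ 2 + 2 * q.2.2.1 ^ 2 + 2 * q.2.2.2 ^ 2 = 0 ∧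
        Nat.gcd (Nat.gcd (Nat.gcd (Nat.gcd q.1.val q.2.1.val) q.2.2.1.val) q.2.2.2.val) m
          = 1} : ℚ) =
      m ^ 3 * ∏ p ∈ m.primeFactors, (1 - 1 / (p : ℚ) ^ 2) * (1 + 1 / (p : ℚ)) :=
  count_primitive_null_vectors_general m hm
end

section
/- Let g ∈ H₍₁,₂,₂₎ and suppose N(g) is an even integer. Then there exist h, h′ ∈ H₍₁,₂,₂₎ with g = (1 + i)·h and g = h′·(1 + i). -/
open Quaternion

noncomputable section

/-! In the coordinates `g = a v₁ + b v₂ + c v₃ + d v₄` the norm is the integral quadratic form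
`a² + b² + (a + b)(c + d) + c² + d² + cd`. Reducing it modulo 2 shows that it is even only if
`c + d` and `a + b + c` are even, and these two congruences are precisely what makes the
coordinates of `(1 + i)⁻¹ g` and `g (1 + i)⁻¹` integral. -/

section Coordinates

variable (a b c d : ℤ)

theorem combination_eq_mk :
    a • v₁ + b • v₂ + c • v₃ + d • v₄ =
      ⟨a + (c + d) / 2, b + (c + d) / 2, c * (√2 / 2), d * (√2 / 2)⟩ := by
  ext <;> simp <;> simp [v₁, v₂, v₃, v₄] <;> ring

theorem normSq_combination :
    normSq (a • v₁ + b • v₂ + c • v₃ + d • v₄) =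
      ((a ^ 2 + b ^ 2 + (a + b) * (c + d) + c ^ 2 + d ^ 2 + c * d : ℤ) : ℝ) := by
  have hsqrt : √2 ^ 2 = 2 := Real.sq_sqrt zero_le_two
  rw [normSq_def', combination_eq_mk]
  push_cast
  linear_combination ((c : ℝ) ^ 2 + (d : ℝ) ^ 2) / 4 * hsqrt

theorem even_of_even_normForm
    (h : Even (a ^ 2 + b ^ 2 + (a + b) * (c + d) + c ^ 2 + d ^ 2 + c * d)) :
    Even (c + d) ∧ Even (a + b + c) := by
  simp only [← ZMod.intCast_eq_zero_iff_even] at h ⊢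
  push_cast at h ⊢
  generalize (a : ZMod 2) = A, (b : ZMod 2) = B, (c : ZMod 2) = C, (d : ZMod 2) = D at h ⊢
  revert A B C D
  decide

variable {a b c d} (s t : ℤ)

theorem combination_eq_one_add_v₂_mul (hs : c + d = 2 * s) (ht : a + b + c = 2 * t) :
    a • v₁ + b • v₂ + c • v₃ + d • v₄ =
      (1 + v₂) * (t • v₁ + (t - a - s) • v₂ + s • v₃ + (d - s) • v₄) := by
  obtain rfl : c = 2 * s - d := by omega
  obtain rfl : a = 2 * t - b - 2 * s + d := by omega
  ext <;> simp only [re_mul, imI_mul, imJ_mul, imK_mul] <;>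
    rw [combination_eq_mk, combination_eq_mk] <;> simp <;> simp [v₂] <;> ring

theorem combination_eq_mul_one_add_v₂ (hs : c + d = 2 * s) (ht : a + b + c = 2 * t) :
    a • v₁ + b • v₂ + c • v₃ + d • v₄ =
      ((t - s + d) • v₁ + (t - a - c) • v₂ + (c - s) • v₃ + s • v₄) * (1 + v₂) := by
  obtain rfl : c = 2 * s - d := by omega
  obtain rfl : a = 2 * t - b - 2 * s + d := by omega
  ext <;> simp only [re_mul, imI_mul, imJ_mul, imK_mul] <;>
    rw [combination_eq_mk, combination_eq_mk] <;> simp <;> simp [v₂] <;> ring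

end Coordinates

/-- If `g ∈ H₍₁,₂,₂₎` has even norm, then `1 + i` divides `g` on the left and
on the right within `H₍₁,₂,₂₎`. -/
theorem left_right_factor_one_add_i (g : ℍ[ℝ]) (hg : g ∈ H122)
    (n : ℤ) (hn : Even n) (hN : g * star g = (n : ℍ[ℝ])) :
    (∃ h ∈ H122, g = (1 + v₂) * h) ∧ (∃ h' ∈ H122, g = h' * (1 + v₂)) := by
  obtain ⟨a, b, c, d, rfl⟩ := hg
  have hnorm : a ^ 2 + b ^ 2 + (a + b) * (c + d) + c ^ 2 + d ^ 2 + c * d = n := by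
    rw [self_mul_star, normSq_combination, ← coe_intCast, coe_inj] at hN
    exact_mod_cast hN
  obtain ⟨⟨s, hs⟩, ⟨t, ht⟩⟩ := even_of_even_normForm a b c d (hnorm ▸ hn)
  rw [← two_mul] at hs ht
  exact ⟨⟨_, ⟨_, _, _, _, rfl⟩, combination_eq_one_add_v₂_mul s t hs ht⟩,
    ⟨_, ⟨_, _, _, _, rfl⟩, combination_eq_mul_one_add_v₂ s t hs ht⟩⟩
end
end

section
/- For every g ∈ H₍₁,₂,₂₎ there is exactly one element m₀ of the set {0, 1, v₃, 1 + v₃} such that g − m₀ = h·(1 + i) for some h ∈ H₍₁,₂,₂₎; likewise there is exactly one element m₀ of {0, 1, v₃, 1 + v₃} such that g − m₀ = (1 + i)·h for some h ∈ H₍₁,₂,₂₎. -/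
/-!
In the ℤ-basis `v₁, v₂, v₃, v₄` of `H₍₁,₂,₂₎`, multiplication by `1 + i` on either side is an
explicit integer linear map, and in both cases its image is the sublattice of coordinate vectors
`(a, b, c, d)` with `a + b + d` and `c + d` even. Hence the coset of `g` modulo `1 + i` is
determined by these two parities, and the coordinate vectors `(e, 0, f, 0)`, `e, f ∈ {0, 1}`, of
`0, 1, v₃, 1 + v₃` realise each pair of parities exactly once.
-/

open Quaternion

noncomputable section

def ofCoords (a b c d : ℤ) : ℍ[ℝ] := a • v₁ + b • v₂ + c • v₃ + d • v₄

lemma ofCoords_mem (a b c d : ℤ) : ofCoords a b c d ∈ H122 := ⟨a, b, c, d, rfl⟩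

lemma ofCoords_eq_mk (a b c d : ℤ) :
    ofCoords a b c d =
      ⟨a + c / 2 + d / 2, b + c / 2 + d / 2, c * (√2 / 2), d * (√2 / 2)⟩ := by
  ext <;> simp [ofCoords] <;> simp [v₁, v₂, v₃, v₄] <;> ring

lemma ofCoords_inj {a b c d a' b' c' d' : ℤ} :
    ofCoords a b c d = ofCoords a' b' c' d' ↔ a = a' ∧ b = b' ∧ c = c' ∧ d = d' := by
  refine ⟨fun h ↦ ?_, by rintro ⟨rfl, rfl, rfl, rfl⟩; rfl⟩
  have hmk := (ofCoords_eq_mk ..).symm.trans (h.trans (ofCoords_eq_mk ..))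
  obtain ⟨hre, hi, hj, hk⟩ := QuaternionAlgebra.mk.inj hmk
  have hs : √2 / 2 ≠ 0 := by positivity
  have hc : (c : ℝ) = c' := mul_right_cancel₀ hs hj
  have hd : (d : ℝ) = d' := mul_right_cancel₀ hs hk
  rw [hc, hd] at hre hi
  have ha : (a : ℝ) = a' := by linarith
  have hb : (b : ℝ) = b' := by linarith
  norm_cast at ha hb hc hd

lemma ofCoords_sub (a b c d a' b' c' d' : ℤ) :
    ofCoords a b c d - ofCoords a' b' c' d' = ofCoords (a - a') (b - b') (c - c') (d - d') := by
  simp only [ofCoords, sub_smul]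
  abel

lemma one_add_v₂_eq_mk : (1 + v₂ : ℍ[ℝ]) = ⟨1, 1, 0, 0⟩ := by
  ext <;> simp <;> simp [v₂]

lemma ofCoords_mul_one_add_v₂ (a b c d : ℤ) :
    ofCoords a b c d * (1 + v₂) = ofCoords (a - b - d) (a + b + c) (c + d) (d - c) := by
  ext <;> simp only [Quaternion.re_mul, Quaternion.imI_mul, Quaternion.imJ_mul,
    Quaternion.imK_mul] <;> simp only [ofCoords_eq_mk, one_add_v₂_eq_mk] <;> push_cast <;> ring

lemma one_add_v₂_mul_ofCoords (a b c d : ℤ) :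
    (1 + v₂) * ofCoords a b c d = ofCoords (a - b - c) (a + b + d) (c - d) (c + d) := by
  ext <;> simp only [Quaternion.re_mul, Quaternion.imI_mul, Quaternion.imJ_mul,
    Quaternion.imK_mul] <;> simp only [ofCoords_eq_mk, one_add_v₂_eq_mk] <;> push_cast <;> ring

lemma ofCoords_mem_mul_one_add_v₂_iff (a b c d : ℤ) :
    (∃ h ∈ H122, ofCoords a b c d = h * (1 + v₂)) ↔ 2 ∣ a + b + d ∧ 2 ∣ c + d := by
  constructor
  · rintro ⟨_, ⟨x, y, z, w, rfl⟩, he⟩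
    rw [← ofCoords, ofCoords_mul_one_add_v₂, ofCoords_inj] at he
    omega
  · rintro ⟨h₁, h₂⟩
    refine ⟨ofCoords ((a + b + d) / 2) ((b - a - c) / 2) ((c - d) / 2) ((c + d) / 2),
      ofCoords_mem .., ?_⟩
    rw [ofCoords_mul_one_add_v₂, ofCoords_inj]
    omega

lemma ofCoords_mem_one_add_v₂_mul_iff (a b c d : ℤ) :
    (∃ h ∈ H122, ofCoords a b c d = (1 + v₂) * h) ↔ 2 ∣ a + b + d ∧ 2 ∣ c + d := by
  constructor
  · rintro ⟨_, ⟨x, y, z, w, rfl⟩, he⟩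
    rw [← ofCoords, one_add_v₂_mul_ofCoords, ofCoords_inj] at he
    omega
  · rintro ⟨h₁, h₂⟩
    refine ⟨ofCoords ((a + b + c) / 2) ((b - a - d) / 2) ((c + d) / 2) ((d - c) / 2),
      ofCoords_mem .., ?_⟩
    rw [one_add_v₂_mul_ofCoords, ofCoords_inj]
    omega

lemma mem_reps_iff {m : ℍ[ℝ]} :
    m ∈ ({0, 1, v₃, 1 + v₃} : Set ℍ[ℝ]) ↔
      ∃ e f : ℤ, (e = 0 ∨ e = 1) ∧ (f = 0 ∨ f = 1) ∧ m = ofCoords e 0 f 0 := by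
  have h₀ : ofCoords 0 0 0 0 = 0 := by simp [ofCoords]
  have h₁ : ofCoords 1 0 0 0 = 1 := by simp [ofCoords, v₁]
  have h₃ : ofCoords 0 0 1 0 = v₃ := by simp [ofCoords]
  have h₄ : ofCoords 1 0 1 0 = 1 + v₃ := by simp [ofCoords, v₁]
  constructor
  · rintro (rfl | rfl | rfl | rfl)
    exacts [⟨0, 0, by simp, by simp, h₀.symm⟩, ⟨1, 0, by simp, by simp, h₁.symm⟩,
      ⟨0, 1, by simp, by simp, h₃.symm⟩, ⟨1, 1, by simp, by simp, h₄.symm⟩]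
  · rintro ⟨e, f, he | he, hf | hf, rfl⟩ <;> subst e f <;> simp [h₀, h₁, h₃, h₄]

lemma existsUnique_rep_of_parity {P : ℍ[ℝ] → Prop}
    (hP : ∀ a b c d, P (ofCoords a b c d) ↔ 2 ∣ a + b + d ∧ 2 ∣ c + d)
    {g : ℍ[ℝ]} (hg : g ∈ H122) :
    ∃! m₀ : ℍ[ℝ], m₀ ∈ ({0, 1, v₃, 1 + v₃} : Set ℍ[ℝ]) ∧ P (g - m₀) := by
  obtain ⟨a, b, c, d, rfl⟩ := hg
  refine ⟨ofCoords ((a + b + d) % 2) 0 ((c + d) % 2) 0,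
    ⟨mem_reps_iff.2 ⟨_, _, by omega, by omega, rfl⟩, ?_⟩, ?_⟩
  · rw [← ofCoords, ofCoords_sub, hP]
    omega
  · rintro _ ⟨hm, hPm⟩
    obtain ⟨e, f, he, hf, rfl⟩ := mem_reps_iff.1 hm
    rw [← ofCoords, ofCoords_sub, hP] at hPm
    rw [ofCoords_inj]
    omega

/-- `{0, 1, v₃, 1 + v₃}` is a complete set of coset representatives of `H₍₁,₂,₂₎`
modulo `1 + i`, for `1 + i` viewed either as a right or as a left factor. -/
theorem coset_reps_mod_one_add_i (g : ℍ[ℝ]) (hg : g ∈ H122) :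
    (∃! m₀ : ℍ[ℝ], m₀ ∈ ({0, 1, v₃, 1 + v₃} : Set ℍ[ℝ]) ∧
      ∃ h ∈ H122, g - m₀ = h * (1 + v₂)) ∧
    (∃! m₀ : ℍ[ℝ], m₀ ∈ ({0, 1, v₃, 1 + v₃} : Set ℍ[ℝ]) ∧
      ∃ h ∈ H122, g - m₀ = (1 + v₂) * h) :=
  ⟨existsUnique_rep_of_parity (P := fun q ↦ ∃ h ∈ H122, q = h * (1 + v₂))
      ofCoords_mem_mul_one_add_v₂_iff hg,
    existsUnique_rep_of_parity (P := fun q ↦ ∃ h ∈ H122, q = (1 + v₂) * h)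
      ofCoords_mem_one_add_v₂_mul_iff hg⟩
end
end

section
/- Let b ∈ H₍₁,₂,₂₎ be an odd quaternion. Then there is exactly one unit u of H₍₁,₂,₂₎ such that b·u is primary, and exactly one unit u₁ of H₍₁,₂,₂₎ such that u₁·b is primary. -/
open Quaternion

noncomputable section

/-- `q` is primary: `q ∈ H₍₁,₂,₂₎` and `q − 1` or `q − (1 + 2v₃)` lies in `2(1+i)·H₍₁,₂,₂₎`. -/
def Primary (q : ℍ[ℝ]) : Prop :=
  q ∈ H122 ∧
    ((∃ h ∈ H122, q - 1 = 2 * (1 + v₂) * h) ∨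
     (∃ h ∈ H122, q - (1 + 2 * v₃) = 2 * (1 + v₂) * h))

/-! ### Auxiliary integer-coordinate model -/

/-- Coordinate parametrization of `H122`. -/
def Phi (a b c d : ℤ) : ℍ[ℝ] := a • v₁ + b • v₂ + c • v₃ + d • v₄

lemma mem_H122_iff {q : ℍ[ℝ]} : q ∈ H122 ↔ ∃ a b c d : ℤ, q = Phi a b c d := Iff.rfl

lemma Phi_eq (a b c d : ℤ) : Phi a b c d =
    ⟨(a:ℝ) + ((c:ℝ)+(d:ℝ))/2, (b:ℝ) + ((c:ℝ)+(d:ℝ))/2,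
      Real.sqrt 2 * (c:ℝ) / 2, Real.sqrt 2 * (d:ℝ) / 2⟩ := by
  simp only [Phi]
  ext <;> simp <;> simp [v₁, v₂, v₃, v₄] <;> ring

lemma Phi_congr {a b c d a' b' c' d' : ℤ} (h1 : a = a') (h2 : b = b') (h3 : c = c')
    (h4 : d = d') : Phi a b c d = Phi a' b' c' d' := by rw [h1, h2, h3, h4]

lemma Phi_mul (a1 b1 c1 d1 a2 b2 c2 d2 : ℤ) :
    Phi a1 b1 c1 d1 * Phi a2 b2 c2 d2 =
    Phi (a1*a2 - b1*b2 - b1*c2 - c1*c2 - d1*b2 - d1*c2 - d1*d2)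
        (a1*b2 + b1*a2 + b1*d2 + c1*b2 + c1*d2 - d1*c2)
        (a1*c2 - b1*d2 + c1*a2 + c1*c2 + d1*b2 + d1*c2)
        (a1*d2 + b1*c2 - c1*b2 + d1*a2 + d1*c2 + d1*d2) := by
  have hs : Real.sqrt 2 * Real.sqrt 2 = 2 := Real.mul_self_sqrt (by norm_num)
  ext <;>
    simp only [Quaternion.re_mul, Quaternion.imI_mul, Quaternion.imJ_mul,
      Quaternion.imK_mul] <;> simp only [Phi_eq] <;>
    push_cast <;>
    first
    | ring1
    | linear_combination ((-(c1:ℝ)*c2 - (d1:ℝ)*(d2:ℝ))/4) * hs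
    | linear_combination (((c1:ℝ)*(d2:ℝ) - (d1:ℝ)*(c2:ℝ))/4) * hs

lemma Phi_star (a b c d : ℤ) : star (Phi a b c d) = Phi (a+c+d) (-b) (-c) (-d) := by
  ext <;>
    simp only [Quaternion.re_star, Quaternion.imI_star, Quaternion.imJ_star,
      Quaternion.imK_star] <;> simp only [Phi_eq] <;>
    push_cast <;> ring

lemma Phi_inj {a b c d a' b' c' d' : ℤ} (h : Phi a b c d = Phi a' b' c' d') :
    a = a' ∧ b = b' ∧ c = c' ∧ d = d' := by
  rw [Phi_eq, Phi_eq] at h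
  have hs : Real.sqrt 2 ≠ 0 := by positivity
  injection h with h1 h2 h3 h4
  have hc : (c:ℝ) = c' := mul_left_cancel₀ hs (by linarith)
  have hd : (d:ℝ) = d' := mul_left_cancel₀ hs (by linarith)
  have hc' : c = c' := by exact_mod_cast hc
  have hd' : d = d' := by exact_mod_cast hd
  refine ⟨?_, ?_, hc', hd'⟩
  · have : (a:ℝ) = a' := by rw [hc, hd] at h1; linarith
    exact_mod_cast this
  · have : (b:ℝ) = b' := by rw [hc, hd] at h2; linarith
    exact_mod_cast this

lemma Phi_sub (a b c d a' b' c' d' : ℤ) :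
    Phi a b c d - Phi a' b' c' d' = Phi (a-a') (b-b') (c-c') (d-d') := by
  ext <;> simp only [Quaternion.re_sub, Quaternion.imI_sub, Quaternion.imJ_sub,
      Quaternion.imK_sub] <;> simp only [Phi_eq] <;> push_cast <;> ring

lemma Phi_one : (1 : ℍ[ℝ]) = Phi 1 0 0 0 := by
  rw [Phi_eq]; ext <;> simp

lemma Phi_coe (n : ℤ) : ((n : ℝ) : ℍ[ℝ]) = Phi n 0 0 0 := by
  rw [Phi_eq]; ext <;> simp

lemma Phi_add (a b c d a' b' c' d' : ℤ) :
    Phi a b c d + Phi a' b' c' d' = Phi (a+a') (b+b') (c+c') (d+d') := by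
  ext <;> simp only [Quaternion.re_add, Quaternion.imI_add, Quaternion.imJ_add,
      Quaternion.imK_add] <;> simp only [Phi_eq] <;> push_cast <;> ring

lemma Phi_v2 : v₂ = Phi 0 1 0 0 := by
  rw [Phi_eq]; ext <;> simp [v₂]

lemma Phi_v3 : v₃ = Phi 0 0 1 0 := by
  rw [Phi_eq]; ext <;> simp [v₃] <;> ring

lemma Phi_two : (2 : ℍ[ℝ]) = Phi 2 0 0 0 := by
  rw [← one_add_one_eq_two, Phi_one, Phi_add]
  exact Phi_congr (by norm_num) (by norm_num) (by norm_num) (by norm_num)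

lemma two_one_v2 : 2 * (1 + v₂) = Phi 2 2 0 0 := by
  rw [Phi_two, Phi_one, Phi_v2, Phi_add, Phi_mul]
  exact Phi_congr (by ring) (by ring) (by ring) (by ring)

lemma one_two_v3 : (1 : ℍ[ℝ]) + 2 * v₃ = Phi 1 0 2 0 := by
  rw [Phi_two, Phi_one, Phi_v3, Phi_mul, Phi_add]
  exact Phi_congr (by ring) (by ring) (by ring) (by ring)

lemma two_mul_Phi (e f g k : ℤ) :
    2 * (1 + v₂) * Phi e f g k = Phi (2*e-2*f-2*g) (2*e+2*f+2*k) (2*g-2*k) (2*g+2*k) := by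
  rw [two_one_v2, Phi_mul]
  exact Phi_congr (by ring) (by ring) (by ring) (by ring)

/-- The integer norm form. -/
def Nf (a b c d : ℤ) : ℤ := a^2+b^2+c^2+d^2+(a+b)*(c+d)+c*d

lemma Phi_mul_star (a b c d : ℤ) :
    Phi a b c d * star (Phi a b c d) = ((Nf a b c d : ℝ) : ℍ[ℝ]) := by
  rw [Phi_star, Phi_mul, Phi_coe]
  exact Phi_congr (by unfold Nf; ring) (by ring) (by ring) (by ring)

lemma star_Phi_mul (a b c d : ℤ) :
    star (Phi a b c d) * Phi a b c d = ((Nf a b c d : ℝ) : ℍ[ℝ]) := by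
  rw [Phi_star, Phi_mul, Phi_coe]
  exact Phi_congr (by unfold Nf; ring) (by ring) (by ring) (by ring)

lemma normSq_Phi (a b c d : ℤ) : normSq (Phi a b c d) = (Nf a b c d : ℝ) := by
  have h := Quaternion.self_mul_star (Phi a b c d)
  rw [Phi_mul_star] at h
  exact (Quaternion.coe_injective h.symm)

/-! ### The mod 4 model -/

abbrev Z4 := ZMod 4 × ZMod 4 × ZMod 4 × ZMod 4

def red4 (a b c d : ℤ) : Z4 := ((a : ZMod 4), (b : ZMod 4), (c : ZMod 4), (d : ZMod 4))

def mz (x y : Z4) : Z4 :=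
  ⟨x.1*y.1 - x.2.1*y.2.1 - x.2.1*y.2.2.1 - x.2.2.1*y.2.2.1 - x.2.2.2*y.2.1 - x.2.2.2*y.2.2.1 - x.2.2.2*y.2.2.2,
   x.1*y.2.1 + x.2.1*y.1 + x.2.1*y.2.2.2 + x.2.2.1*y.2.1 + x.2.2.1*y.2.2.2 - x.2.2.2*y.2.2.1,
   x.1*y.2.2.1 - x.2.1*y.2.2.2 + x.2.2.1*y.1 + x.2.2.1*y.2.2.1 + x.2.2.2*y.2.1 + x.2.2.2*y.2.2.1,
   x.1*y.2.2.2 + x.2.1*y.2.2.1 - x.2.2.1*y.2.1 + x.2.2.2*y.1 + x.2.2.2*y.2.2.1 + x.2.2.2*y.2.2.2⟩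

def Nz (x : Z4) : ZMod 4 :=
  x.1^2 + x.2.1^2 + x.2.2.1^2 + x.2.2.2^2 + (x.1 + x.2.1)*(x.2.2.1 + x.2.2.2) + x.2.2.1*x.2.2.2

/-- components of left multiplication by `1 - i`. -/
def Az (w : Z4) : Z4 :=
  ⟨w.1 + w.2.1 + w.2.2.1, -w.1 + w.2.1 - w.2.2.2, w.2.2.1 + w.2.2.2, -w.2.2.1 + w.2.2.2⟩

def primz (q : Z4) : Prop :=
  Az (q - (1,0,0,0)) = 0 ∨ Az (q - (1,0,2,0)) = 0

instance : DecidablePred primz := fun q => by unfold primz; infer_instance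

lemma red4_mul (a1 b1 c1 d1 a2 b2 c2 d2 : ℤ) :
    red4 (a1*a2 - b1*b2 - b1*c2 - c1*c2 - d1*b2 - d1*c2 - d1*d2)
        (a1*b2 + b1*a2 + b1*d2 + c1*b2 + c1*d2 - d1*c2)
        (a1*c2 - b1*d2 + c1*a2 + c1*c2 + d1*b2 + d1*c2)
        (a1*d2 + b1*c2 - c1*b2 + d1*a2 + d1*c2 + d1*d2) =
      mz (red4 a1 b1 c1 d1) (red4 a2 b2 c2 d2) := by
  simp only [red4, mz, Prod.mk.injEq]
  refine ⟨?_, ?_, ?_, ?_⟩ <;> push_cast <;> ring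

lemma red4_Nf (a b c d : ℤ) : ((Nf a b c d : ℤ) : ZMod 4) = Nz (red4 a b c d) := by
  simp only [Nf, Nz, red4]; push_cast; ring

set_option maxRecDepth 10000 in
lemma Az_two_mul : ∀ w : Z4, Az (mz ((2:ZMod 4),(2:ZMod 4),(0:ZMod 4),(0:ZMod 4)) w) = 0 := by
  decide

lemma red4_two : red4 2 2 0 0 = ((2:ZMod 4),(2:ZMod 4),(0:ZMod 4),(0:ZMod 4)) := by
  simp [red4]

/-- Membership in the ideal `2(1+i)·H122`, in coordinates. -/
lemma mem_ideal_iff (a b c d : ℤ) :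
    (∃ h ∈ H122, Phi a b c d = 2 * (1 + v₂) * h) ↔ Az (red4 a b c d) = 0 := by
  constructor
  · rintro ⟨h, hh, heq⟩
    obtain ⟨e, f, g, k, rfl⟩ := mem_H122_iff.mp hh
    rw [two_mul_Phi] at heq
    obtain ⟨ha, hb, hc, hd⟩ := Phi_inj heq
    have h1 : red4 a b c d = mz ((2:ZMod 4),(2:ZMod 4),(0:ZMod 4),(0:ZMod 4)) (red4 e f g k) := by
      rw [ha, hb, hc, hd]
      simp only [red4, mz, Prod.mk.injEq]
      refine ⟨?_, ?_, ?_, ?_⟩ <;> push_cast <;> ring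
    rw [h1]; exact Az_two_mul _
  · intro hz
    simp only [Az, red4, Prod.mk.injEq, Prod.ext_iff] at hz
    obtain ⟨h1, h2, h3, h4⟩ := hz
    rw [show ((a:ZMod 4) + b + c) = ((a + b + c : ℤ) : ZMod 4) by push_cast; ring] at h1
    rw [show (-(a:ZMod 4) + b - d) = ((-a + b - d : ℤ) : ZMod 4) by push_cast; ring] at h2
    rw [show ((c:ZMod 4) + d) = ((c + d : ℤ) : ZMod 4) by push_cast; ring] at h3
    rw [show (-(c:ZMod 4) + d) = ((-c + d : ℤ) : ZMod 4) by push_cast; ring] at h4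
    have d1 := (ZMod.intCast_zmod_eq_zero_iff_dvd _ 4).mp h1
    have d2 := (ZMod.intCast_zmod_eq_zero_iff_dvd _ 4).mp h2
    have d3 := (ZMod.intCast_zmod_eq_zero_iff_dvd _ 4).mp h3
    have d4 := (ZMod.intCast_zmod_eq_zero_iff_dvd _ 4).mp h4
    obtain ⟨e, he⟩ := d1
    obtain ⟨f, hf⟩ := d2
    obtain ⟨g, hg⟩ := d3
    obtain ⟨k, hk⟩ := d4
    refine ⟨Phi e f g k, mem_H122_iff.mpr ⟨e, f, g, k, rfl⟩, ?_⟩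
    rw [two_mul_Phi]
    push_cast at he hf hg hk
    exact Phi_congr (by omega) (by omega) (by omega) (by omega)

lemma red4_sub_one (a b c d : ℤ) : red4 (a-1) b c d = red4 a b c d - (1,0,0,0) := by
  simp only [red4, Prod.mk.injEq, Prod.ext_iff, Prod.fst_sub, Prod.snd_sub]
  refine ⟨?_, ?_, ?_, ?_⟩ <;> push_cast <;> ring

lemma red4_sub_r2 (a b c d : ℤ) : red4 (a-1) b (c-2) d = red4 a b c d - (1,0,2,0) := by
  simp only [red4, Prod.mk.injEq, Prod.ext_iff, Prod.fst_sub, Prod.snd_sub]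
  refine ⟨?_, ?_, ?_, ?_⟩ <;> push_cast <;> ring

/-- Primary in coordinates. -/
lemma primary_iff (a b c d : ℤ) : Primary (Phi a b c d) ↔ primz (red4 a b c d) := by
  have e1 : Phi a b c d - 1 = Phi (a-1) b c d := by
    rw [Phi_one, Phi_sub]; exact Phi_congr rfl (by ring) (by ring) (by ring)
  have e2 : Phi a b c d - (1 + 2 * v₃) = Phi (a-1) b (c-2) d := by
    rw [one_two_v3, Phi_sub]; exact Phi_congr rfl (by ring) rfl (by ring)
  constructor
  · rintro ⟨-, hP | hP⟩
    · rw [e1] at hP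
      left; rw [← red4_sub_one]; exact (mem_ideal_iff _ _ _ _).mp hP
    · rw [e2] at hP
      right; rw [← red4_sub_r2]; exact (mem_ideal_iff _ _ _ _).mp hP
  · rintro (hP | hP)
    · exact ⟨mem_H122_iff.mpr ⟨a,b,c,d,rfl⟩, Or.inl (by
        rw [e1]; exact (mem_ideal_iff _ _ _ _).mpr (by rw [red4_sub_one]; exact hP))⟩
    · exact ⟨mem_H122_iff.mpr ⟨a,b,c,d,rfl⟩, Or.inr (by
        rw [e2]; exact (mem_ideal_iff _ _ _ _).mpr (by rw [red4_sub_r2]; exact hP))⟩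

/-! ### The 24 units -/

def unitsL : List (ℤ × ℤ × ℤ × ℤ) :=
  [(-1,-1,0,1),(-1,-1,1,0),(-1,-1,1,1),(-1,0,0,0),(-1,0,0,1),(-1,0,1,0),
   (0,-1,0,0),(0,-1,0,1),(0,-1,1,0),(0,0,-1,0),(0,0,-1,1),(0,0,0,-1),
   (0,0,0,1),(0,0,1,-1),(0,0,1,0),(0,1,-1,0),(0,1,0,-1),(0,1,0,0),
   (1,0,-1,0),(1,0,0,-1),(1,0,0,0),(1,1,-1,-1),(1,1,-1,0),(1,1,0,-1)]

def redT (u : ℤ × ℤ × ℤ × ℤ) : Z4 := red4 u.1 u.2.1 u.2.2.1 u.2.2.2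

lemma units_norm : ∀ u ∈ unitsL, Nf u.1 u.2.1 u.2.2.1 u.2.2.2 = 1 := by decide

set_option maxRecDepth 40000 in
lemma norm_one_cases (a b c d : ℤ) (h : Nf a b c d = 1) : (a,b,c,d) ∈ unitsL := by
  have h4 : (2*a+c+d)^2 + (2*b+c+d)^2 + 2*c^2 + 2*d^2 = 4 := by
    unfold Nf at h; linear_combination 4*h
  have hc1 : -1 ≤ c := by nlinarith [sq_nonneg (2*a+c+d), sq_nonneg (2*b+c+d), sq_nonneg d, sq_nonneg (c+1), sq_nonneg (c-1)]
  have hc2 : c ≤ 1 := by nlinarith [sq_nonneg (2*a+c+d), sq_nonneg (2*b+c+d), sq_nonneg d, sq_nonneg (c+1), sq_nonneg (c-1)]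
  have hd1 : -1 ≤ d := by nlinarith [sq_nonneg (2*a+c+d), sq_nonneg (2*b+c+d), sq_nonneg c, sq_nonneg (d+1), sq_nonneg (d-1)]
  have hd2 : d ≤ 1 := by nlinarith [sq_nonneg (2*a+c+d), sq_nonneg (2*b+c+d), sq_nonneg c, sq_nonneg (d+1), sq_nonneg (d-1)]
  have ha' : (2*a+c+d)^2 ≤ 4 := by nlinarith [sq_nonneg (2*b+c+d), sq_nonneg c, sq_nonneg d]
  have hb' : (2*b+c+d)^2 ≤ 4 := by nlinarith [sq_nonneg (2*a+c+d), sq_nonneg c, sq_nonneg d]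
  have ha1 : -2 ≤ 2*a+c+d := by nlinarith [sq_nonneg (2*a+c+d+2), sq_nonneg (2*a+c+d-2)]
  have ha2 : 2*a+c+d ≤ 2 := by nlinarith [sq_nonneg (2*a+c+d+2), sq_nonneg (2*a+c+d-2)]
  have hb1 : -2 ≤ 2*b+c+d := by nlinarith [sq_nonneg (2*b+c+d+2), sq_nonneg (2*b+c+d-2)]
  have hb2 : 2*b+c+d ≤ 2 := by nlinarith [sq_nonneg (2*b+c+d+2), sq_nonneg (2*b+c+d-2)]
  have haa : -2 ≤ a ∧ a ≤ 2 := by omega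
  have hbb : -2 ≤ b ∧ b ≤ 2 := by omega
  obtain ⟨ha3, ha4⟩ := haa
  obtain ⟨hb3, hb4⟩ := hbb
  clear h ha' hb' ha1 ha2 hb1 hb2
  interval_cases a <;> interval_cases b <;> interval_cases c <;> interval_cases d <;>
    revert h4 <;> decide

/-! ### The finite verification -/

lemma length_one_mem {α : Type*} {l : List α} (h : l.length = 1) {u v : α}
    (hu : u ∈ l) (hv : v ∈ l) : u = v := by
  match l, h with
  | [a], _ =>
    simp only [List.mem_singleton] at hu hv
    rw [hu, hv]

lemma exists_mem_of_length_one {α : Type*} {l : List α} (h : l.length = 1) : ∃ u, u ∈ l := by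
  match l, h with
  | [a], _ => exact ⟨a, by simp⟩

set_option maxRecDepth 100000 in
set_option maxHeartbeats 16000000 in
lemma keyR : ∀ x : Z4, (Nz x = 1 ∨ Nz x = 3) →
    (unitsL.filter (fun u => decide (primz (mz x (redT u))))).length = 1 := by decide

set_option maxRecDepth 100000 in
set_option maxHeartbeats 16000000 in
lemma keyL : ∀ x : Z4, (Nz x = 1 ∨ Nz x = 3) →
    (unitsL.filter (fun u => decide (primz (mz (redT u) x)))).length = 1 := by decide

/-! ### Units of H122 -/

lemma isUnitH_of_norm_one (a b c d : ℤ) (h : Nf a b c d = 1) : IsUnitH (Phi a b c d) := by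
  refine ⟨mem_H122_iff.mpr ⟨a,b,c,d,rfl⟩, star (Phi a b c d), ?_, ?_, ?_⟩
  · rw [Phi_star]; exact mem_H122_iff.mpr ⟨_,_,_,_,rfl⟩
  · rw [Phi_mul_star, h]; norm_num
  · rw [star_Phi_mul, h]; norm_num

lemma norm_one_of_isUnitH (a b c d : ℤ) (h : IsUnitH (Phi a b c d)) : Nf a b c d = 1 := by
  obtain ⟨-, v, hv, huv, -⟩ := h
  obtain ⟨e, f, g, k, rfl⟩ := mem_H122_iff.mp hv
  have h1 : normSq (Phi a b c d) * normSq (Phi e f g k) = 1 := by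
    rw [← map_mul, huv, map_one]
  rw [normSq_Phi, normSq_Phi] at h1
  have h2 : Nf a b c d * Nf e f g k = 1 := by exact_mod_cast h1
  have h3 : (0:ℝ) ≤ (Nf a b c d : ℝ) := by
    rw [← normSq_Phi]; exact normSq_nonneg
  have h4 : (0:ℤ) ≤ Nf a b c d := by exact_mod_cast h3
  rcases Int.isUnit_iff.mp (IsUnit.of_mul_eq_one _ h2) with h5 | h5
  · exact h5
  · omega

lemma odd_Nz (a b c d : ℤ) (h : Odd (Nf a b c d)) :
    Nz (red4 a b c d) = 1 ∨ Nz (red4 a b c d) = 3 := by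
  obtain ⟨t, ht⟩ := h
  rw [← red4_Nf, ht]
  have : ∀ s : ZMod 4, 2*s+1 = 1 ∨ 2*s+1 = 3 := by decide
  push_cast
  exact this _

set_option maxHeartbeats 2000000 in
/-- For an odd quaternion `b ∈ H₍₁,₂,₂₎`, exactly one unit `u` of `H₍₁,₂,₂₎` makes `b·u`
primary, and exactly one unit `u₁` makes `u₁·b` primary. -/
theorem odd_quaternion_unique_primary_associate (b : ℍ[ℝ]) (hb : b ∈ H122)
    (hodd : ∃ n : ℤ, Odd n ∧ b * star b = (n : ℍ[ℝ])) :
    (∃! u : ℍ[ℝ], IsUnitH u ∧ Primary (b * u)) ∧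
    (∃! u₁ : ℍ[ℝ], IsUnitH u₁ ∧ Primary (u₁ * b)) := by
  obtain ⟨a, b', c, d, rfl⟩ := mem_H122_iff.mp hb
  obtain ⟨n, hn, hmul⟩ := hodd
  have hNf : Nf a b' c d = n := by
    rw [Phi_mul_star] at hmul
    have : ((Nf a b' c d : ℝ) : ℍ[ℝ]) = ((n : ℝ) : ℍ[ℝ]) := by
      rw [hmul]; push_cast; rfl
    exact_mod_cast Quaternion.coe_injective this
  have hodd4 : Nz (red4 a b' c d) = 1 ∨ Nz (red4 a b' c d) = 3 :=
    odd_Nz _ _ _ _ (hNf ▸ hn)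
  constructor
  · -- right version
    have hkey := keyR _ hodd4
    obtain ⟨u, huF⟩ := exists_mem_of_length_one hkey
    obtain ⟨huL, hupzb⟩ := List.mem_filter.mp huF
    have hupz := of_decide_eq_true hupzb
    obtain ⟨ua, ub, uc, ud⟩ := u
    refine ⟨Phi ua ub uc ud, ⟨isUnitH_of_norm_one _ _ _ _ (units_norm _ huL), ?_⟩, ?_⟩
    · rw [Phi_mul, primary_iff, red4_mul]
      exact hupz
    · rintro u' ⟨hu'unit, hu'prim⟩
      obtain ⟨va, vb, vc, vd, rfl⟩ := mem_H122_iff.mp hu'unit.1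
      have hvL : (va, vb, vc, vd) ∈ unitsL :=
        norm_one_cases _ _ _ _ (norm_one_of_isUnitH _ _ _ _ hu'unit)
      rw [Phi_mul, primary_iff, red4_mul] at hu'prim
      have hvF : (va, vb, vc, vd) ∈ unitsL.filter
          (fun u => decide (primz (mz (red4 a b' c d) (redT u)))) :=
        List.mem_filter.mpr ⟨hvL, decide_eq_true hu'prim⟩
      have h' := length_one_mem hkey hvF huF
      rw [Prod.mk.injEq, Prod.mk.injEq, Prod.mk.injEq] at h'
      obtain ⟨e1, e2, e3, e4⟩ := h'
      rw [e1, e2, e3, e4]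
  · -- left version
    have hkey := keyL _ hodd4
    obtain ⟨u, huF⟩ := exists_mem_of_length_one hkey
    obtain ⟨huL, hupzb⟩ := List.mem_filter.mp huF
    have hupz := of_decide_eq_true hupzb
    obtain ⟨ua, ub, uc, ud⟩ := u
    refine ⟨Phi ua ub uc ud, ⟨isUnitH_of_norm_one _ _ _ _ (units_norm _ huL), ?_⟩, ?_⟩
    · rw [Phi_mul, primary_iff, red4_mul]
      exact hupz
    · rintro u' ⟨hu'unit, hu'prim⟩
      obtain ⟨va, vb, vc, vd, rfl⟩ := mem_H122_iff.mp hu'unit.1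
      have hvL : (va, vb, vc, vd) ∈ unitsL :=
        norm_one_cases _ _ _ _ (norm_one_of_isUnitH _ _ _ _ hu'unit)
      rw [Phi_mul, primary_iff, red4_mul] at hu'prim
      have hvF : (va, vb, vc, vd) ∈ unitsL.filter
          (fun u => decide (primz (mz (redT u) (red4 a b' c d)))) :=
        List.mem_filter.mpr ⟨hvL, decide_eq_true hu'prim⟩
      have h' := length_one_mem hkey hvF huF
      rw [Prod.mk.injEq, Prod.mk.injEq, Prod.mk.injEq] at h'
      obtain ⟨e1, e2, e3, e4⟩ := h'
      rw [e1, e2, e3, e4]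
end
end

section
/- Let a be a nonnegative integer. For every quaternion q, there exists h ∈ H₍₁,₂,₂₎ with q = h · (2^a(1 + i)) if and only if there exists h′ ∈ H₍₁,₂,₂₎ with q = (2^a(1 + i)) · h′; that is, the left ideal, the right ideal, and the two-sided ideal of H₍₁,₂,₂₎ generated by 2^a(1 + i) coincide. -/
open Quaternion

noncomputable section

/-! Conjugation by `1 + i` fixes `1` and `i` and turns the `(j, k)`-plane by a quarter turn
(`(1 + i) j = k (1 + i)`), so it sends `v₃ ↦ v₄`, `v₄ ↦ 1 + i - v₃` and its inverse sends
`v₃ ↦ 1 + i - v₄`, `v₄ ↦ v₃`. Both therefore preserve the lattice `H₍₁,₂,₂₎`, and as `2 ^ a` is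
central, `h · 2 ^ a (1 + i) = 2 ^ a (1 + i) · h'` with `h' = (1 + i)⁻¹ h (1 + i) ∈ H₍₁,₂,₂₎`. -/

open Submodule Set

theorem map_mulRight_span_eq_map_mulLeft_span {R ι : Type*} [Ring R] (v : ι → R) (u : R)
    (hleft : ∀ i, ∃ w ∈ span ℤ (range v), SemiconjBy u w (v i))
    (hright : ∀ i, ∃ w ∈ span ℤ (range v), SemiconjBy u (v i) w) :
    (span ℤ (range v)).map (LinearMap.mulRight ℤ u) =
      (span ℤ (range v)).map (LinearMap.mulLeft ℤ u) := by
  apply le_antisymm <;> rw [map_span, span_le] <;> rintro _ ⟨_, ⟨i, rfl⟩, rfl⟩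
  · obtain ⟨w, hw, h⟩ := hleft i
    exact ⟨w, hw, h⟩
  · obtain ⟨w, hw, h⟩ := hright i
    exact ⟨w, hw, h.symm⟩

local notation "Λ" => span ℤ (range ![v₁, v₂, v₃, v₄])

theorem H122_eq_span : H122 = Λ := by
  ext q
  simp only [H122, SetLike.mem_coe, mem_span_range_iff_exists_fun, Fin.sum_univ_four]
  constructor
  · rintro ⟨a, b, c, d, rfl⟩
    exact ⟨![a, b, c, d], rfl⟩
  · rintro ⟨f, rfl⟩
    exact ⟨f 0, f 1, f 2, f 3, rfl⟩

theorem semiconjBy_one_add_v₂_v₃ : SemiconjBy (1 + v₂) v₃ v₄ := by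
  ext <;> simp [re_mul, imI_mul, imJ_mul, imK_mul] <;> norm_num [v₂, v₃, v₄]

theorem semiconjBy_one_add_v₂_v₄ : SemiconjBy (1 + v₂) v₄ (1 + v₂ - v₃) := by
  ext <;> simp [re_mul, imI_mul, imJ_mul, imK_mul] <;> norm_num [v₂, v₃, v₄]

theorem semiconjBy_one_add_v₂_one_add_v₂_sub_v₄ : SemiconjBy (1 + v₂) (1 + v₂ - v₄) v₃ := by
  simpa only [sub_sub_cancel] using SemiconjBy.sub_right (Commute.refl _) semiconjBy_one_add_v₂_v₄

theorem exists_mem_span_semiconjBy_mul_one_add_v₂_left {c : ℍ[ℝ]} (hc : ∀ x, Commute c x)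
    (i : Fin 4) : ∃ w ∈ Λ, SemiconjBy (c * (1 + v₂)) w (![v₁, v₂, v₃, v₄] i) := by
  suffices ∃ w ∈ Λ, SemiconjBy (1 + v₂) w (![v₁, v₂, v₃, v₄] i)
    by obtain ⟨w, hw, h⟩ := this; exact ⟨w, hw, SemiconjBy.mul_left (hc _) h⟩
  have mem (j : Fin 4) : ![v₁, v₂, v₃, v₄] j ∈ Λ := subset_span ⟨j, rfl⟩
  fin_cases i
  · exact ⟨v₁, mem 0, SemiconjBy.one_right _⟩
  · exact ⟨v₂, mem 1, (Commute.one_left v₂).add_left (Commute.refl v₂)⟩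
  · exact ⟨1 + v₂ - v₄, sub_mem (add_mem (mem 0) (mem 1)) (mem 3),
      semiconjBy_one_add_v₂_one_add_v₂_sub_v₄⟩
  · exact ⟨v₃, mem 2, semiconjBy_one_add_v₂_v₃⟩

theorem exists_mem_span_semiconjBy_mul_one_add_v₂_right {c : ℍ[ℝ]} (hc : ∀ x, Commute c x)
    (i : Fin 4) : ∃ w ∈ Λ, SemiconjBy (c * (1 + v₂)) (![v₁, v₂, v₃, v₄] i) w := by
  suffices ∃ w ∈ Λ, SemiconjBy (1 + v₂) (![v₁, v₂, v₃, v₄] i) w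
    by obtain ⟨w, hw, h⟩ := this; exact ⟨w, hw, SemiconjBy.mul_left (hc w) h⟩
  have mem (j : Fin 4) : ![v₁, v₂, v₃, v₄] j ∈ Λ := subset_span ⟨j, rfl⟩
  fin_cases i
  · exact ⟨v₁, mem 0, SemiconjBy.one_right _⟩
  · exact ⟨v₂, mem 1, (Commute.one_left v₂).add_left (Commute.refl v₂)⟩
  · exact ⟨v₄, mem 3, semiconjBy_one_add_v₂_v₃⟩
  · exact ⟨1 + v₂ - v₃, sub_mem (add_mem (mem 0) (mem 1)) (mem 2), semiconjBy_one_add_v₂_v₄⟩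

/-- For `a ≥ 0`, the left ideal and the right ideal of `H₍₁,₂,₂₎` generated by
`2^a(1 + i)` coincide (and hence agree with the two-sided ideal): a quaternion `q` is
a left multiple of `2^a(1 + i)` by an element of `H₍₁,₂,₂₎` iff it is a right multiple. -/
theorem left_ideal_eq_right_ideal_two_pow_one_add_i (a : ℕ) (q : ℍ[ℝ]) :
    (∃ h ∈ H122, q = h * ((2 : ℍ[ℝ]) ^ a * (1 + v₂))) ↔
    (∃ h' ∈ H122, q = ((2 : ℍ[ℝ]) ^ a * (1 + v₂)) * h') := by
  have hc (x : ℍ[ℝ]) : Commute ((2 : ℍ[ℝ]) ^ a) x := (Commute.ofNat_left 2 x).pow_left a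
  have key := map_mulRight_span_eq_map_mulLeft_span ![v₁, v₂, v₃, v₄] _
    (exists_mem_span_semiconjBy_mul_one_add_v₂_left hc)
    (exists_mem_span_semiconjBy_mul_one_add_v₂_right hc)
  simp only [SetLike.ext_iff, mem_map, LinearMap.mulRight_apply, LinearMap.mulLeft_apply] at key
  simpa only [H122_eq_span, SetLike.mem_coe, eq_comm] using key q
end
end
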